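/- For every integer n ≥ 2, γ_{2t}(K_n □ K_{n+1}) equals (3n+2)/2 if n is even and (3n+3)/2 if n is odd. -/

import Mathlib

open SimpleGraph

/-- `S` is a total 2-dominating set of `G`: every vertex has at least 2 neighbors in `S`. -/
def TotalTwoDom {V : Type*} (G : SimpleGraph V) (S : Set V) : Prop :=
  ∀ v : V, 2 ≤ (S ∩ {u | G.Adj v u}).ncard

/-- The total 2-domination number of `G`. -/
noncomputable def gamma2t {V : Type*} [Fintype V] (G : SimpleGraph V) : ℕ :=
  sInf {k | ∃ S : Set V, TotalTwoDom G S ∧ S.ncard = k}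

/-- The complete graph on `n` vertices. -/
def K (n : ℕ) : SimpleGraph (Fin n) := ⊤

/-!
In the rook's graph `K_a □ K_b`, a vertex `v` has `r + c - 2·[v ∈ T]` neighbours in `T`, where
`r` and `c` count the elements of `T` in the row and in the column of `v`. So `T` is total
2-dominating iff `r + c ≥ 4` at the elements of `T` and `r + c ≥ 2` everywhere.

Lower bound: if some line misses `T`, every line crossing it holds two elements of `T`, so
`|T| ≥ 2 min(a, b)`. Otherwise discharge: a line holding `t` elements gives `6 / min(t, 3)` to
each of them, so each line gives away at least `6`, while `r + c ≥ 4` means an element receives at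
most `8`. Hence `8|T| ≥ 6(a + b)`, i.e. `2|T| ≥ 3n + 3/2` for `a + b = 2n + 1`.

Upper bound: take `p` hub rows and `q` hub columns; every other row gets one element in a hub
column and every other column one element in a hub row, assigned cyclically so that each hub
line receives at least three. This gives `|T| = (a - p) + (b - q)`, and `p + q = ⌊n/2⌋` is
possible once `n ≥ 4`; the cases `n = 2, 3` are checked directly.
-/

open Finset

section Rook

variable {α β : Type*}

def rowCount [DecidableEq α] (T : Finset (α × β)) (i : α) : ℕ := #{u ∈ T | u.1 = i}

def colCount [DecidableEq β] (T : Finset (α × β)) (j : β) : ℕ := #{u ∈ T | u.2 = j}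

lemma rowCount_mono [DecidableEq α] {S T : Finset (α × β)} (h : S ⊆ T) (i : α) :
    rowCount S i ≤ rowCount T i :=
  card_le_card (filter_subset_filter _ h)

lemma colCount_mono [DecidableEq β] {S T : Finset (α × β)} (h : S ⊆ T) (j : β) :
    colCount S j ≤ colCount T j :=
  card_le_card (filter_subset_filter _ h)

lemma rowCount_map_swap [DecidableEq α] (T : Finset (β × α)) (i : α) :
    rowCount (T.map (Equiv.prodComm β α).toEmbedding) i = colCount T i := by
  simp only [rowCount, colCount, filter_map, card_map]
  rfl

lemma colCount_map_swap [DecidableEq β] (T : Finset (β × α)) (j : β) :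
    colCount (T.map (Equiv.prodComm β α).toEmbedding) j = rowCount T j := by
  simp only [rowCount, colCount, filter_map, card_map]
  rfl

variable [DecidableEq α] [DecidableEq β]

lemma rowCount_add_colCount (T : Finset (α × β)) (v : α × β) :
    rowCount T v.1 + colCount T v.2 =
      ((T : Set (α × β)) ∩ {u | ((⊤ : SimpleGraph α) □ (⊤ : SimpleGraph β)).Adj v u}).ncard
        + if v ∈ T then 2 else 0 := by
  classical
  set N := {u ∈ T | ((⊤ : SimpleGraph α) □ (⊤ : SimpleGraph β)).Adj v u}
  have hN : ((T : Set (α × β)) ∩ {u | ((⊤ : SimpleGraph α) □ (⊤ : SimpleGraph β)).Adj v u}).ncard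
      = #N := by
    rw [← Set.ncard_coe_finset, coe_filter]; rfl
  have hunion : {u ∈ T | u.1 = v.1} ∪ {u ∈ T | u.2 = v.2} = N ∪ {u ∈ T | u = v} := by
    simp only [N, ← filter_or, boxProd_adj, top_adj]
    refine filter_congr fun u _ => ?_
    rw [Prod.ext_iff]
    grind
  have hinter : {u ∈ T | u.1 = v.1} ∩ {u ∈ T | u.2 = v.2} = {u ∈ T | u = v} := by
    rw [← filter_and]
    exact filter_congr fun u _ => Prod.ext_iff.symm
  have hdisj : Disjoint N {u ∈ T | u = v} := by
    simp only [N, disjoint_filter]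
    rintro u _ hadj rfl
    exact hadj.ne rfl
  have hv : #{u ∈ T | u = v} = if v ∈ T then 1 else 0 := by
    rw [filter_eq']; split_ifs <;> simp
  have := card_union_add_card_inter {u ∈ T | u.1 = v.1} {u ∈ T | u.2 = v.2}
  rw [hunion, hinter, card_union_of_disjoint hdisj, hv] at this
  rw [hN, rowCount, colCount]
  split_ifs at this ⊢ <;> omega

theorem totalTwoDom_rook_iff (T : Finset (α × β)) :
    TotalTwoDom ((⊤ : SimpleGraph α) □ (⊤ : SimpleGraph β)) T ↔
      (∀ v ∈ T, 4 ≤ rowCount T v.1 + colCount T v.2) ∧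
        ∀ v : α × β, 2 ≤ rowCount T v.1 + colCount T v.2 := by
  have key := rowCount_add_colCount T
  constructor
  · intro h
    refine ⟨fun v hv => ?_, fun v => ?_⟩ <;> have := h v <;> have := key v
    · rw [if_pos hv] at this; omega
    · split_ifs at this <;> omega
  · rintro ⟨h4, h2⟩ v
    have := key v
    by_cases hv : v ∈ T
    · have := h4 v hv; rw [if_pos hv] at *; omega
    · have := h2 v; rw [if_neg hv] at *; omega

lemma totalTwoDom_rook_of_lines {T : Finset (α × β)} (hrow : ∀ i, 1 ≤ rowCount T i)
    (hcol : ∀ j, 1 ≤ colCount T j)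
    (hline : ∀ v ∈ T, 3 ≤ rowCount T v.1 ∨ 3 ≤ colCount T v.2) :
    TotalTwoDom ((⊤ : SimpleGraph α) □ (⊤ : SimpleGraph β)) T := by
  refine (totalTwoDom_rook_iff T).2 ⟨fun v hv => ?_, fun v => ?_⟩ <;>
    have := hrow v.1 <;> have := hcol v.2
  · have := hline v hv
    omega
  · omega

end Rook

section LowerBound

variable {α β : Type*}

lemma sum_rowCount [Fintype α] [DecidableEq α] (T : Finset (α × β)) :
    ∑ i, rowCount T i = #T :=
  (card_eq_sum_card_fiberwise fun _ _ => mem_univ _).symm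

lemma sum_colCount [Fintype β] [DecidableEq β] (T : Finset (α × β)) :
    ∑ j, colCount T j = #T :=
  (card_eq_sum_card_fiberwise fun _ _ => mem_univ _).symm

lemma sum_comp_rowCount [Fintype α] [DecidableEq α] {M : Type*} [AddCommMonoid M]
    (T : Finset (α × β)) (f : ℕ → M) :
    ∑ v ∈ T, f (rowCount T v.1) = ∑ i, rowCount T i • f (rowCount T i) := by
  rw [← sum_fiberwise T Prod.fst]
  refine sum_congr rfl fun i _ => ?_
  rw [sum_congr rfl fun v hv => by rw [(mem_filter.1 hv).2], sum_const]
  rfl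

lemma sum_comp_colCount [Fintype β] [DecidableEq β] {M : Type*} [AddCommMonoid M]
    (T : Finset (α × β)) (f : ℕ → M) :
    ∑ v ∈ T, f (colCount T v.2) = ∑ j, colCount T j • f (colCount T j) := by
  rw [← sum_fiberwise T Prod.snd]
  refine sum_congr rfl fun j _ => ?_
  rw [sum_congr rfl fun v hv => by rw [(mem_filter.1 hv).2], sum_const]
  rfl

lemma two_mul_card_le_of_rowCount_eq_zero [Fintype β] [DecidableEq α] [DecidableEq β]
    {T : Finset (α × β)} (h2 : ∀ v : α × β, 2 ≤ rowCount T v.1 + colCount T v.2) {i : α}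
    (hi : rowCount T i = 0) : 2 * Fintype.card β ≤ #T := by
  calc 2 * Fintype.card β = ∑ _j : β, 2 := by simp [mul_comm]
    _ ≤ ∑ j, colCount T j := sum_le_sum fun j _ => by simpa [hi] using h2 (i, j)
    _ = #T := sum_colCount T

lemma two_mul_card_le_of_colCount_eq_zero [Fintype α] [DecidableEq α] [DecidableEq β]
    {T : Finset (α × β)} (h2 : ∀ v : α × β, 2 ≤ rowCount T v.1 + colCount T v.2) {j : β}
    (hj : colCount T j = 0) : 2 * Fintype.card α ≤ #T := by
  calc 2 * Fintype.card α = ∑ _i : α, 2 := by simp [mul_comm]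
    _ ≤ ∑ i, rowCount T i := sum_le_sum fun i _ => by simpa [hj] using h2 (i, j)
    _ = #T := sum_rowCount T

def lineWeight (t : ℕ) : ℕ := 6 / min t 3

lemma lineWeight_cases {t : ℕ} (ht : 1 ≤ t) :
    t = 1 ∧ lineWeight t = 6 ∨ t = 2 ∧ lineWeight t = 3 ∨ 3 ≤ t ∧ lineWeight t = 2 := by
  rcases (show t = 1 ∨ t = 2 ∨ 3 ≤ t by omega) with rfl | rfl | ht3
  · decide
  · decide
  · exact Or.inr (Or.inr ⟨ht3, by rw [lineWeight, min_eq_right ht3]⟩)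

lemma six_le_mul_lineWeight {t : ℕ} (ht : 1 ≤ t) : 6 ≤ t * lineWeight t := by
  rcases lineWeight_cases ht with ⟨_, h⟩ | ⟨_, h⟩ | ⟨_, h⟩ <;> rw [h] <;> omega

lemma lineWeight_add_le {x y : ℕ} (hx : 1 ≤ x) (hy : 1 ≤ y) (hxy : 4 ≤ x + y) :
    lineWeight x + lineWeight y ≤ 8 := by
  rcases lineWeight_cases hx with ⟨_, h⟩ | ⟨_, h⟩ | ⟨_, h⟩ <;>
    rcases lineWeight_cases hy with ⟨_, h'⟩ | ⟨_, h'⟩ | ⟨_, h'⟩ <;> omega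

variable [Fintype α] [Fintype β] [DecidableEq α] [DecidableEq β] {T : Finset (α × β)}

lemma three_mul_card_add_card_le (h4 : ∀ v ∈ T, 4 ≤ rowCount T v.1 + colCount T v.2)
    (hrow : ∀ i, 1 ≤ rowCount T i) (hcol : ∀ j, 1 ≤ colCount T j) :
    3 * (Fintype.card α + Fintype.card β) ≤ 4 * #T := by
  have hcharge :
      ∑ v ∈ T, (lineWeight (rowCount T v.1) + lineWeight (colCount T v.2)) ≤ 8 * #T := by
    simpa [mul_comm] using sum_le_card_nsmul T _ 8 fun v hv =>
      lineWeight_add_le (hrow v.1) (hcol v.2) (h4 v hv)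
  have hrowCharge : 6 * Fintype.card α ≤ ∑ v ∈ T, lineWeight (rowCount T v.1) := by
    rw [sum_comp_rowCount]
    simpa [mul_comm] using sum_le_sum fun i (_ : i ∈ univ) => six_le_mul_lineWeight (hrow i)
  have hcolCharge : 6 * Fintype.card β ≤ ∑ v ∈ T, lineWeight (colCount T v.2) := by
    rw [sum_comp_colCount]
    simpa [mul_comm] using sum_le_sum fun j (_ : j ∈ univ) => six_le_mul_lineWeight (hcol j)
  rw [sum_add_distrib] at hcharge
  omega

theorem totalTwoDom_rook_card_lower_bound
    (hT : TotalTwoDom ((⊤ : SimpleGraph α) □ (⊤ : SimpleGraph β)) T) :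
    3 * (Fintype.card α + Fintype.card β) ≤ 4 * #T ∨
      2 * min (Fintype.card α) (Fintype.card β) ≤ #T := by
  obtain ⟨h4, h2⟩ := (totalTwoDom_rook_iff T).1 hT
  by_cases hrow : ∃ i, rowCount T i = 0
  · obtain ⟨i, hi⟩ := hrow
    have := two_mul_card_le_of_rowCount_eq_zero h2 hi
    omega
  by_cases hcol : ∃ j, colCount T j = 0
  · obtain ⟨j, hj⟩ := hcol
    have := two_mul_card_le_of_colCount_eq_zero h2 hj
    omega
  push Not at hrow hcol
  exact Or.inl (three_mul_card_add_card_le h4 (fun i => Nat.one_le_iff_ne_zero.2 (hrow i))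
    fun j => Nat.one_le_iff_ne_zero.2 (hcol j))

end LowerBound

section Construction

def hubSet (a b p q : ℕ) : Finset (Fin a × Fin b) :=
  {v | p ≤ v.1.val ∧ v.2.val = (v.1.val - p) % q}

variable {a b p q : ℕ}

lemma mem_hubSet {v : Fin a × Fin b} :
    v ∈ hubSet a b p q ↔ p ≤ v.1.val ∧ v.2.val = (v.1.val - p) % q := by
  simp [hubSet]

lemma rowCount_hubSet (hq : 0 < q) (hqb : q ≤ b) (i : Fin a) :
    rowCount (hubSet a b p q) i = if p ≤ i.val then 1 else 0 := by
  split_ifs with hi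
  · rw [rowCount, card_eq_one]
    refine ⟨(i, ⟨(i.val - p) % q, (Nat.mod_lt _ hq).trans_le hqb⟩), ?_⟩
    ext v
    simp only [mem_filter, mem_hubSet, mem_singleton, Prod.ext_iff, Fin.ext_iff]
    grind
  · rw [rowCount, card_eq_zero, filter_eq_empty_iff]
    rintro v hv rfl
    exact hi (mem_hubSet.1 hv).1

lemma card_hubSet (hq : 0 < q) (hqb : q ≤ b) : #(hubSet a b p q) = a - p := by
  rw [← sum_rowCount]
  simp only [rowCount_hubSet hq hqb, sum_boole, Nat.cast_id]
  have := card_filter_add_card_filter_not (s := univ) fun i : Fin a => i.val < p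
  simp only [Fin.card_filter_val_lt, card_univ, Fintype.card_fin, not_lt] at this
  omega

lemma three_le_colCount_hubSet (hq : 0 < q) (hpq : p + 3 * q ≤ a) {j : Fin b} (hj : j.val < q) :
    3 ≤ colCount (hubSet a b p q) j := by
  have hbound : ∀ k : Fin 3, p + j.val + k.val * q < a := fun k => by
    have : k.val * q ≤ 2 * q := Nat.mul_le_mul_right q (by omega)
    omega
  calc 3 = #(univ : Finset (Fin 3)) := rfl
    _ ≤ colCount (hubSet a b p q) j := by
      refine card_le_card_of_injOn (fun k => (⟨p + j.val + k.val * q, hbound k⟩, j)) ?_ ?_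
      · intro k _
        simp only [coe_filter, mem_hubSet, Set.mem_ofPred_eq, and_true]
        refine ⟨by omega, ?_⟩
        rw [add_assoc, Nat.add_sub_cancel_left, Nat.add_mul_mod_self_right, Nat.mod_eq_of_lt hj]
      · intro k _ k' _ h
        simp only [Prod.mk.injEq, Fin.mk.injEq, add_right_inj] at h
        exact Fin.ext (Nat.eq_of_mul_eq_mul_right hq h.1)

lemma le_fst_and_snd_lt_of_mem_hubSet (hq : 0 < q) {v : Fin a × Fin b} (hv : v ∈ hubSet a b p q) :
    p ≤ v.1.val ∧ v.2.val < q := by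
  obtain ⟨hp, h2⟩ := mem_hubSet.1 hv
  exact ⟨hp, h2 ▸ Nat.mod_lt _ hq⟩

theorem exists_totalTwoDom_rook (hp : 0 < p) (hq : 0 < q)
    (hpb : 3 * p + q ≤ b) (hqa : p + 3 * q ≤ a) :
    ∃ T : Finset (Fin a × Fin b),
      TotalTwoDom ((⊤ : SimpleGraph (Fin a)) □ (⊤ : SimpleGraph (Fin b))) T ∧
        #T = a - p + (b - q) := by
  set H := hubSet a b p q
  set H' := (hubSet b a q p).map (Equiv.prodComm (Fin b) (Fin a)).toEmbedding
  have hH : H ⊆ H ∪ H' := subset_union_left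
  have hH' : H' ⊆ H ∪ H' := subset_union_right
  have hrow3 : ∀ i : Fin a, i.val < p → 3 ≤ rowCount (H ∪ H') i := fun i hi =>
    calc 3 ≤ colCount (hubSet b a q p) i := three_le_colCount_hubSet hp (by omega) hi
      _ = rowCount H' i := (rowCount_map_swap _ i).symm
      _ ≤ _ := rowCount_mono hH' i
  have hcol3 : ∀ j : Fin b, j.val < q → 3 ≤ colCount (H ∪ H') j := fun j hj =>
    (three_le_colCount_hubSet hq hqa hj).trans (colCount_mono hH j)
  refine ⟨H ∪ H', totalTwoDom_rook_of_lines (fun i => ?_) (fun j => ?_) fun v hv => ?_, ?_⟩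
  · rcases lt_or_ge i.val p with hi | hi
    · exact (hrow3 i hi).trans' (by norm_num)
    · calc 1 = rowCount H i := by rw [rowCount_hubSet hq (by omega), if_pos hi]
        _ ≤ _ := rowCount_mono hH i
  · rcases lt_or_ge j.val q with hj | hj
    · exact (hcol3 j hj).trans' (by norm_num)
    · calc 1 = rowCount (hubSet b a q p) j := by rw [rowCount_hubSet hp (by omega), if_pos hj]
        _ = colCount H' j := (colCount_map_swap _ j).symm
        _ ≤ _ := colCount_mono hH' j
  · rcases mem_union.1 hv with hv | hv
    · exact Or.inr (hcol3 v.2 (le_fst_and_snd_lt_of_mem_hubSet hq hv).2)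
    · obtain ⟨w, hw, rfl⟩ := mem_map.1 hv
      exact Or.inl (hrow3 w.2 (le_fst_and_snd_lt_of_mem_hubSet hp hw).2)
  · have hdisj : Disjoint H H' := by
      refine disjoint_left.2 fun v hv hv' => ?_
      obtain ⟨w, hw, rfl⟩ := mem_map.1 hv'
      have := (le_fst_and_snd_lt_of_mem_hubSet hq hv).1
      have := (le_fst_and_snd_lt_of_mem_hubSet hp hw).2
      simp only [Equiv.coe_toEmbedding, Equiv.prodComm_apply, Prod.fst_swap] at *
      omega
    rw [card_union_of_disjoint hdisj, card_map, card_hubSet hq (by omega),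
      card_hubSet hp (by omega)]

end Construction

lemma gamma2t_le_ncard {V : Type*} [Fintype V] {G : SimpleGraph V} {S : Set V}
    (hS : TotalTwoDom G S) : gamma2t G ≤ S.ncard :=
  Nat.sInf_le ⟨S, hS, rfl⟩

lemma exists_totalTwoDom_ncard_eq_gamma2t {V : Type*} [Fintype V] {G : SimpleGraph V}
    {S : Set V} (hS : TotalTwoDom G S) : ∃ S', TotalTwoDom G S' ∧ S'.ncard = gamma2t G :=
  Nat.sInf_mem (s := {k | ∃ S : Set V, TotalTwoDom G S ∧ S.ncard = k}) ⟨_, S, hS, rfl⟩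

lemma three_mul_add_two_le_two_mul_ncard {n : ℕ} (hn : 2 ≤ n) {S : Set (Fin n × Fin (n + 1))}
    (hS : TotalTwoDom (K n □ K (n + 1)) S) : 3 * n + 2 ≤ 2 * S.ncard := by
  obtain ⟨T, rfl⟩ : ∃ T : Finset (Fin n × Fin (n + 1)), ↑T = S := ⟨S.toFinite.toFinset, by simp⟩
  have := totalTwoDom_rook_card_lower_bound hS
  rw [Fintype.card_fin, Fintype.card_fin] at this
  rw [Set.ncard_coe_finset]
  omega

lemma exists_totalTwoDom_K_card_eq {n : ℕ} (hn : 2 ≤ n) : ∃ T : Finset (Fin n × Fin (n + 1)),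
    TotalTwoDom (K n □ K (n + 1)) T ∧ #T = (3 * n + 3) / 2 := by
  obtain rfl | rfl | hn4 : n = 2 ∨ n = 3 ∨ 4 ≤ n := by omega
  · exact ⟨{(0, 0), (0, 1), (1, 0), (1, 1)}, (totalTwoDom_rook_iff _).2 (by decide), rfl⟩
  · exact ⟨({v | v.1 = 0 ∨ v.2 = 0} : Finset (Fin 3 × Fin 4)),
      (totalTwoDom_rook_iff _).2 (by decide), rfl⟩
  · obtain ⟨T, hT, hcard⟩ := exists_totalTwoDom_rook (a := n) (b := n + 1)
      (p := n / 2 - n / 4) (q := n / 4) (by omega) (by omega) (by omega) (by omega)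
    exact ⟨T, hT, by omega⟩

theorem stmt_18 (n : ℕ) (hn : 2 ≤ n) :
    (n % 2 = 0 → 2 * gamma2t (K n □ K (n + 1)) = 3 * n + 2) ∧
    (n % 2 = 1 → 2 * gamma2t (K n □ K (n + 1)) = 3 * n + 3) := by
  obtain ⟨T, hT, hcard⟩ := exists_totalTwoDom_K_card_eq hn
  have hupper : gamma2t (K n □ K (n + 1)) ≤ (3 * n + 3) / 2 := by
    simpa [hcard] using gamma2t_le_ncard hT
  obtain ⟨S, hS, hSγ⟩ := exists_totalTwoDom_ncard_eq_gamma2t hT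
  have hlower := three_mul_add_two_le_two_mul_ncard hn hS
  omega
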